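/- arXiv:1710.11286 — 2 statements merged into one kernel-verified Lean document; each statement's English description precedes it below -/
import Mathlib

section
/- Let e_t ∈ ℝ^m, 1 ≤ t ≤ T, be random vectors forming a second-order stationary mean-zero process with finite fourth moments, satisfying: (i) Σ_{u∈ℤ} (E[e_1ᵀ e_{1+u}]/m)² ≤ S < ∞, and (ii) sup_{t,s} (1/m) Σ_{i,j=1}^m |Cov(e_{t,i}e_{s,i}, e_{t,j}e_{s,j})| ≤ B. Let E be the T×m matrix with rows e_tᵀ. Then E[(‖E‖²/(Tm))²] ≤ S/T + B/m, where ‖E‖ is the spectral norm. -/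
/-!
With `G = EᵀE` the `m × m` Gram matrix, `‖E‖⁴ = ‖G‖² ≤ ∑ᵢⱼ Gᵢⱼ²` (operator norm below Frobenius
norm), and `Gᵢⱼ² = ∑ₜₛ e_{t,i} e_{s,i} e_{t,j} e_{s,j}`. For a fixed pair `(t, s)` the expected sum
over `i, j` is `∑ᵢⱼ Cov(e_{t,i} e_{s,i}, e_{t,j} e_{s,j}) + (E[e_tᵀ e_s])²`, at most
`m B + γ(s - t)²` with `γ(u) = E[e_1ᵀ e_{1+u}]` by stationarity; for each `t` the lags `s - t`
are distinct, so `∑ₛ γ(s - t)² ≤ m² S`. Summing over the `T²` pairs and dividing by `(T m)²`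
gives `B / m + S / T`.
-/

open MeasureTheory Matrix
open scoped Matrix

noncomputable def specNorm {T m : ℕ} (A : Matrix (Fin T) (Fin m) ℝ) : ℝ :=
  ‖(Matrix.toEuclideanLin A).toContinuousLinearMap‖

noncomputable def cov {Ω : Type*} [MeasurableSpace Ω] (μ : Measure Ω) (X Y : Ω → ℝ) : ℝ :=
  (∫ ω, X ω * Y ω ∂μ) - (∫ ω, X ω ∂μ) * (∫ ω, Y ω ∂μ)

open Finset

open scoped Matrix.Norms.L2Operator in
theorem Matrix.l2_opNorm_sq_le_sum_sq {m n : Type*} [Fintype m] [Fintype n] [DecidableEq n]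
    (B : Matrix m n ℝ) : ‖B‖ ^ 2 ≤ ∑ i, ∑ j, B i j ^ 2 := by
  have hF : 0 ≤ ∑ i, ∑ j, B i j ^ 2 := by positivity
  suffices ‖B‖ ≤ √(∑ i, ∑ j, B i j ^ 2) from
    (pow_le_pow_left₀ (norm_nonneg _) this 2).trans_eq (Real.sq_sqrt hF)
  refine ContinuousLinearMap.opNorm_le_bound _ (Real.sqrt_nonneg _) fun x => ?_
  rw [← Real.sqrt_sq (norm_nonneg x), ← Real.sqrt_mul hF,
    Real.le_sqrt (norm_nonneg _) (by positivity), EuclideanSpace.real_norm_sq_eq,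
    EuclideanSpace.real_norm_sq_eq, sum_mul]
  refine sum_le_sum fun i _ => ?_
  simpa [mulVec, dotProduct] using sum_mul_sq_le_sq_mul_sq univ (B i) x

open scoped Matrix.Norms.L2Operator in
theorem specNorm_sq_sq_le_sum_sq_gram {T m : ℕ} (A : Matrix (Fin T) (Fin m) ℝ) :
    (specNorm A ^ 2) ^ 2 ≤ ∑ i, ∑ j, (∑ t, A t i * A t j) ^ 2 := by
  have hgram : specNorm A ^ 2 = ‖Aᵀ * A‖ := by
    rw [sq, ← conjTranspose_eq_transpose_of_trivial, l2_opNorm_conjTranspose_mul_self]; rfl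
  simpa [hgram, mul_apply] using (Aᵀ * A).l2_opNorm_sq_le_sum_sq

theorem sum_integral_mul_le_of_abs_cov_le {Ω ι : Type*} [MeasurableSpace Ω] (μ : Measure Ω)
    [Fintype ι] [Nonempty ι] (Z : ι → Ω → ℝ) {B : ℝ}
    (hB : 1 / (Fintype.card ι : ℝ) * ∑ i, ∑ j, |cov μ (Z i) (Z j)| ≤ B) :
    ∑ i, ∑ j, ∫ ω, Z i ω * Z j ω ∂μ ≤ Fintype.card ι * B + (∑ i, ∫ ω, Z i ω ∂μ) ^ 2 := by
  have hsplit : ∀ i j,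
      ∫ ω, Z i ω * Z j ω ∂μ = cov μ (Z i) (Z j) + (∫ ω, Z i ω ∂μ) * ∫ ω, Z j ω ∂μ :=
    fun i j => by rw [cov]; ring
  have hcov : ∑ i, ∑ j, |cov μ (Z i) (Z j)| ≤ Fintype.card ι * B := by
    rwa [← div_le_iff₀' (by positivity), div_eq_inv_mul, ← one_div]
  simp_rw [hsplit, sum_add_distrib, sq, sum_mul_sum]
  gcongr
  exact (sum_le_sum fun i _ => sum_le_sum fun j _ => le_abs_self _).trans hcov

theorem sum_sum_sq_comp_sub_le {κ : Type*} [Fintype κ] {g : κ → ℤ} (hg : Function.Injective g)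
    {γ : ℤ → ℝ} {c S : ℝ} (hc : c ≠ 0) (hsum : Summable fun u => (γ u / c) ^ 2)
    (hS : ∑' u, (γ u / c) ^ 2 ≤ S) :
    ∑ t, ∑ s, γ (g s - g t) ^ 2 ≤ Fintype.card κ * (c ^ 2 * S) := by
  have hrow : ∀ t, ∑ s, (γ (g s - g t) / c) ^ 2 ≤ S := fun t => by
    rw [← tsum_fintype (L := .unconditional _)]
    exact (tsum_comp_le_tsum_of_inj hsum (fun _ => sq_nonneg _)
      fun s s' h => hg (sub_left_injective h)).trans hS
  calc ∑ t, ∑ s, γ (g s - g t) ^ 2 = c ^ 2 * ∑ t, ∑ s, (γ (g s - g t) / c) ^ 2 := by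
        simp_rw [mul_sum, div_pow, mul_div_cancel₀ _ (pow_ne_zero 2 hc)]
    _ ≤ c ^ 2 * ∑ _t : κ, S := by gcongr with t; exact hrow t
    _ = Fintype.card κ * (c ^ 2 * S) := by simp only [sum_const, card_univ, nsmul_eq_mul]; ring

theorem sum_sq_gram_eq {κ ι R : Type*} [Fintype κ] [Fintype ι] [CommSemiring R] (x : κ → ι → R) :
    ∑ i, ∑ j, (∑ t, x t i * x t j) ^ 2 = ∑ t, ∑ s, ∑ i, ∑ j, x t i * x s i * (x t j * x s j) := by
  calc ∑ i, ∑ j, (∑ t, x t i * x t j) ^ 2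
      = ∑ i, ∑ j, ∑ t, ∑ s, x t i * x s i * (x t j * x s j) := by
        simp_rw [sq, sum_mul_sum, mul_mul_mul_comm]
    _ = ∑ i, ∑ t, ∑ j, ∑ s, x t i * x s i * (x t j * x s j) := sum_congr rfl fun i _ => sum_comm
    _ = ∑ t, ∑ i, ∑ s, ∑ j, x t i * x s i * (x t j * x s j) := by
        rw [sum_comm]; exact sum_congr rfl fun t _ => sum_congr rfl fun i _ => sum_comm
    _ = ∑ t, ∑ s, ∑ i, ∑ j, x t i * x s i * (x t j * x s j) := sum_congr rfl fun t _ => sum_comm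

section GramMoments

variable {Ω κ ι : Type*} [MeasurableSpace Ω] {μ : Measure Ω} [Fintype κ] [Fintype ι]
  {X : κ → ι → Ω → ℝ}

theorem integrable_sum_sq_gram
    (hX : ∀ t s i j, Integrable (fun ω => X t i ω * X s i ω * (X t j ω * X s j ω)) μ) :
    Integrable (fun ω => ∑ i, ∑ j, (∑ t, X t i ω * X t j ω) ^ 2) μ := by
  simp_rw [sum_sq_gram_eq fun t i => X t i _]
  exact integrable_finsetSum _ fun t _ => integrable_finsetSum _ fun s _ =>
    integrable_finsetSum _ fun i _ => integrable_finsetSum _ fun j _ => hX t s i j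

theorem integral_sum_sq_gram
    (hX : ∀ t s i j, Integrable (fun ω => X t i ω * X s i ω * (X t j ω * X s j ω)) μ) :
    ∫ ω, ∑ i, ∑ j, (∑ t, X t i ω * X t j ω) ^ 2 ∂μ =
      ∑ t, ∑ s, ∑ i, ∑ j, ∫ ω, X t i ω * X s i ω * (X t j ω * X s j ω) ∂μ := by
  simp_rw [sum_sq_gram_eq fun t i => X t i _]
  rw [integral_finsetSum _ fun t _ => integrable_finsetSum _ fun s _ =>
    integrable_finsetSum _ fun i _ => integrable_finsetSum _ fun j _ => hX t s i j]
  refine sum_congr rfl fun t _ => ?_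
  rw [integral_finsetSum _ fun s _ =>
    integrable_finsetSum _ fun i _ => integrable_finsetSum _ fun j _ => hX t s i j]
  refine sum_congr rfl fun s _ => ?_
  rw [integral_finsetSum _ fun i _ => integrable_finsetSum _ fun j _ => hX t s i j]
  exact sum_congr rfl fun i _ => integral_finsetSum _ fun j _ => hX t s i j

theorem integral_sq_specNorm_sq_div_le {T m : ℕ} (A : Ω → Matrix (Fin T) (Fin m) ℝ) (c : ℝ)
    (hA : ∀ t s i j, Integrable (fun ω => A ω t i * A ω s i * (A ω t j * A ω s j)) μ) :
    ∫ ω, (specNorm (A ω) ^ 2 / c) ^ 2 ∂μ ≤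
      (∑ t, ∑ s, ∑ i, ∑ j, ∫ ω, A ω t i * A ω s i * (A ω t j * A ω s j) ∂μ) / c ^ 2 := by
  rw [← integral_sum_sq_gram (X := fun t i ω => A ω t i) hA, ← integral_div]
  refine integral_mono_of_nonneg (.of_forall fun ω => sq_nonneg _)
    ((integrable_sum_sq_gram (X := fun t i ω => A ω t i) hA).div_const _)
    (.of_forall fun ω => ?_)
  beta_reduce
  rw [div_pow]
  gcongr
  exact specNorm_sq_sq_le_sum_sq_gram _

end GramMoments

theorem stmt7_general {Ω : Type*} [MeasurableSpace Ω] (μ : Measure Ω)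
    {m : ℕ} (hm : 0 < m) (T : ℕ) (hT : 0 < T) (e : ℤ → Fin m → Ω → ℝ)
    (hint4 : ∀ t s : ℤ, ∀ i j : Fin m,
      Integrable (fun ω => e t i ω * e s i ω * (e t j ω * e s j ω)) μ)
    (hint2 : ∀ t s : ℤ, ∀ i : Fin m, Integrable (fun ω => e t i ω * e s i ω) μ)
    (hstat : ∀ t u : ℤ, (∫ ω, ∑ i : Fin m, e t i ω * e (t + u) i ω ∂μ) =
      ∫ ω, ∑ i : Fin m, e 1 i ω * e (1 + u) i ω ∂μ)
    (S B : ℝ)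
    (hsum : Summable (fun u : ℤ =>
      ((∫ ω, ∑ i : Fin m, e 1 i ω * e (1 + u) i ω ∂μ) / m) ^ 2))
    (hS : (∑' u : ℤ, ((∫ ω, ∑ i : Fin m, e 1 i ω * e (1 + u) i ω ∂μ) / m) ^ 2) ≤ S)
    (hB : ∀ t s : ℤ, (1 / (m : ℝ)) * ∑ i : Fin m, ∑ j : Fin m,
      |cov μ (fun ω => e t i ω * e s i ω) (fun ω => e t j ω * e s j ω)| ≤ B) :
    (∫ ω, ((specNorm (Matrix.of fun (t : Fin T) (j : Fin m) => e ((t : ℕ) + 1) j ω)) ^ 2 /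
        ((T : ℝ) * m)) ^ 2 ∂μ) ≤ S / T + B / m := by
  have hmR : (0 : ℝ) < m := by exact_mod_cast hm
  set γ : ℤ → ℝ := fun u => ∫ ω, ∑ i : Fin m, e 1 i ω * e (1 + u) i ω ∂μ
  set τ : Fin T → ℤ := fun t => (t : ℕ) + 1
  have : Nonempty (Fin m) := Fin.pos_iff_nonempty.mp hm
  have hpair : ∀ t s : ℤ, ∑ i, ∑ j, ∫ ω, e t i ω * e s i ω * (e t j ω * e s j ω) ∂μ ≤
      m * B + γ (s - t) ^ 2 := fun t s => by
    have hγ : γ (s - t) = ∑ i, ∫ ω, e t i ω * e s i ω ∂μ := by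
      rw [← integral_finsetSum _ fun i _ => hint2 t s i]
      simpa using (hstat t (s - t)).symm
    simpa [hγ] using sum_integral_mul_le_of_abs_cov_le μ (fun i ω => e t i ω * e s i ω)
      (by simpa using hB t s)
  have hγ_sum : ∑ t, ∑ s, γ (τ s - τ t) ^ 2 ≤ T * (m ^ 2 * S) := by
    simpa using sum_sum_sq_comp_sub_le (g := τ) (fun t s h => Fin.ext (by simpa [τ] using h))
      hmR.ne' hsum hS
  calc ∫ ω, (specNorm (of fun (t : Fin T) (j : Fin m) => e ((t : ℕ) + 1) j ω) ^ 2 /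
        ((T : ℝ) * m)) ^ 2 ∂μ
      ≤ (∑ t, ∑ s, ∑ i, ∑ j, ∫ ω, e (τ t) i ω * e (τ s) i ω * (e (τ t) j ω * e (τ s) j ω) ∂μ) /
        ((T : ℝ) * m) ^ 2 :=
        integral_sq_specNorm_sq_div_le _ _ fun t s i j => hint4 (τ t) (τ s) i j
    _ ≤ (∑ t, ∑ s, (m * B + γ (τ s - τ t) ^ 2)) / ((T : ℝ) * m) ^ 2 := by
        gcongr with t _ s _
        exact hpair _ _
    _ ≤ (T * (T * (m * B)) + T * (m ^ 2 * S)) / ((T : ℝ) * m) ^ 2 := by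
        gcongr ?_ / _
        simp only [sum_add_distrib, sum_const, card_univ, Fintype.card_fin, nsmul_eq_mul]
        exact add_le_add le_rfl hγ_sum
    _ = S / T + B / m := by
        field_simp
        ring

/-- Lemma 1 of the paper, expectation form: under second-order stationarity, mean zero,
the autocovariance summability bound S and the fourth-cumulant bound B, the matrix E with
rows e_tᵀ, t = 1,…,T, satisfies E[(‖E‖²/(Tm))²] ≤ S/T + B/m (spectral norm). -/
theorem stmt7 {Ω : Type*} [MeasurableSpace Ω] (μ : Measure Ω) [IsProbabilityMeasure μ]
    {m : ℕ} (hm : 0 < m) (T : ℕ) (hT : 0 < T) (e : ℤ → Fin m → Ω → ℝ)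
    (hmeas : ∀ t i, Measurable (e t i))
    (hint4 : ∀ t s : ℤ, ∀ i j : Fin m,
      Integrable (fun ω => e t i ω * e s i ω * (e t j ω * e s j ω)) μ)
    (hint2 : ∀ t s : ℤ, ∀ i : Fin m, Integrable (fun ω => e t i ω * e s i ω) μ)
    (hmean : ∀ t : ℤ, ∀ i : Fin m, (∫ ω, e t i ω ∂μ) = 0)
    (hstat : ∀ t u : ℤ, (∫ ω, ∑ i : Fin m, e t i ω * e (t + u) i ω ∂μ) =
      ∫ ω, ∑ i : Fin m, e 1 i ω * e (1 + u) i ω ∂μ)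
    (S B : ℝ)
    (hsum : Summable (fun u : ℤ =>
      ((∫ ω, ∑ i : Fin m, e 1 i ω * e (1 + u) i ω ∂μ) / m) ^ 2))
    (hS : (∑' u : ℤ, ((∫ ω, ∑ i : Fin m, e 1 i ω * e (1 + u) i ω ∂μ) / m) ^ 2) ≤ S)
    (hB : ∀ t s : ℤ, (1 / (m : ℝ)) * ∑ i : Fin m, ∑ j : Fin m,
      |cov μ (fun ω => e t i ω * e s i ω) (fun ω => e t j ω * e s j ω)| ≤ B) :
    (∫ ω, ((specNorm (Matrix.of fun (t : Fin T) (j : Fin m) => e ((t : ℕ) + 1) j ω)) ^ 2 /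
        ((T : ℝ) * m)) ^ 2 ∂μ) ≤ S / T + B / m :=
  stmt7_general μ hm T hT e hint4 hint2 hstat S B hsum hS hB
end

section
/- Deterministic core of the consistency theorem: Let Z = χ + E be T×m real matrices with rank(χ) ≤ r, ‖χ‖ ≤ C√(Tm), and let Ẑ satisfy ‖Z − Ẑ‖_F ≤ ‖E‖_F, rank(Ẑ) ≤ r, ‖Ẑ‖ ≤ C√(Tm) (spectral norms). Then (1/(Tm)) ‖χ − Ẑ‖_F² ≤ 4 r C ‖E‖ / √(Tm). -/
/-!
Comparing the fit of `Zhat` with that of the truth, `‖Z - Zhat‖_F ≤ ‖E‖_F` expands to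
`‖χ - Zhat‖_F² ≤ 2⟨E, Zhat - χ⟩`. Each pairing `⟨E, L⟩ = tr(L Eᵀ)` with `rank L ≤ r` is at most
`r ‖E‖ ‖L‖`: an operator of rank `k` has the same trace as its restriction to its range, and in
an orthonormal basis of that `k`-dimensional space each diagonal entry is bounded by the operator
norm.
-/

open Matrix
open scoped Matrix

/-- Squared Frobenius norm ‖A‖_F² = trace(Aᵀ A). -/
noncomputable def frobSq {T m : ℕ} (A : Matrix (Fin T) (Fin m) ℝ) : ℝ :=
  Matrix.trace (Aᵀ * A)

section TraceBound

open Module LinearMap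

variable {𝕜 E : Type*} [RCLike 𝕜] [NormedAddCommGroup E] [InnerProductSpace 𝕜 E]
  [FiniteDimensional 𝕜 E]

theorem LinearMap.norm_trace_le_finrank_mul (f : E →ₗ[𝕜] E) {c : ℝ}
    (hf : ∀ x, ‖f x‖ ≤ c * ‖x‖) : ‖trace 𝕜 E f‖ ≤ finrank 𝕜 E * c := by
  let b := stdOrthonormalBasis 𝕜 E
  rw [trace_eq_sum_inner f b]
  calc ‖∑ i, inner 𝕜 (b i) (f (b i))‖ ≤ ∑ i, ‖inner 𝕜 (b i) (f (b i))‖ := norm_sum_le _ _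
    _ ≤ ∑ _i, c := Finset.sum_le_sum fun i _ =>
        (norm_inner_le_norm _ _).trans (by simpa [b.norm_eq_one] using hf (b i))
    _ = finrank 𝕜 E * c := by simp

theorem LinearMap.norm_trace_le_finrank_range_mul (f : E →ₗ[𝕜] E) {c : ℝ}
    (hf : ∀ x, ‖f x‖ ≤ c * ‖x‖) : ‖trace 𝕜 E f‖ ≤ finrank 𝕜 (range f) * c := by
  have htrace : trace 𝕜 E f = trace 𝕜 (range f) (f.rangeRestrict ∘ₗ (range f).subtype) := by
    rw [← trace_comp_comm']
    rfl
  rw [htrace]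
  exact norm_trace_le_finrank_mul _ fun x => hf x

end TraceBound

open scoped Matrix.Norms.L2Operator in
theorem Matrix.norm_trace_le_rank_mul_l2_opNorm {𝕜 n : Type*} [RCLike 𝕜] [Fintype n]
    [DecidableEq n] (A : Matrix n n 𝕜) : ‖A.trace‖ ≤ A.rank * ‖A‖ := by
  let b := (EuclideanSpace.basisFun n 𝕜).toBasis
  have htrace : A.trace = LinearMap.trace 𝕜 _ (toEuclideanLin A) := by
    rw [toEuclideanLin_eq_toLin_orthonormal, LinearMap.trace_eq_matrix_trace 𝕜 b,
      LinearMap.toMatrix_toLin]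
  rw [htrace, A.rank_eq_finrank_range_toLin b b]
  exact LinearMap.norm_trace_le_finrank_range_mul _ A.l2_opNorm_mulVec

open scoped Matrix.Norms.L2Operator in
theorem specNorm_eq_l2_opNorm {T m : ℕ} (A : Matrix (Fin T) (Fin m) ℝ) : specNorm A = ‖A‖ :=
  rfl

theorem specNorm_nonneg {T m : ℕ} (A : Matrix (Fin T) (Fin m) ℝ) : 0 ≤ specNorm A :=
  norm_nonneg _

open scoped Matrix.Norms.L2Operator in
theorem abs_trace_transpose_mul_le {T m : ℕ} (E L : Matrix (Fin T) (Fin m) ℝ) :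
    |trace (Eᵀ * L)| ≤ L.rank * specNorm E * specNorm L := by
  calc |trace (Eᵀ * L)| = ‖trace (L * Eᴴ)‖ := by
        rw [trace_mul_comm, conjTranspose_eq_transpose_of_trivial, Real.norm_eq_abs]
    _ ≤ (L * Eᴴ).rank * ‖L * Eᴴ‖ := norm_trace_le_rank_mul_l2_opNorm _
    _ ≤ L.rank * (‖L‖ * ‖Eᴴ‖) := by
        gcongr
        · exact_mod_cast rank_mul_le_left L Eᴴ
        · exact l2_opNorm_mul L Eᴴ
    _ = L.rank * specNorm E * specNorm L := by
        rw [l2_opNorm_conjTranspose, specNorm_eq_l2_opNorm, specNorm_eq_l2_opNorm]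
        ring

theorem abs_trace_transpose_mul_le_of_le {T m r : ℕ} {K : ℝ} (E : Matrix (Fin T) (Fin m) ℝ)
    {L : Matrix (Fin T) (Fin m) ℝ} (hrank : L.rank ≤ r) (hnorm : specNorm L ≤ K) :
    |trace (Eᵀ * L)| ≤ r * specNorm E * K := by
  have := specNorm_nonneg E
  have := specNorm_nonneg L
  calc |trace (Eᵀ * L)| ≤ L.rank * specNorm E * specNorm L := abs_trace_transpose_mul_le E L
    _ ≤ r * specNorm E * K := by gcongr

theorem frobSq_nonneg {T m : ℕ} (A : Matrix (Fin T) (Fin m) ℝ) : 0 ≤ frobSq A := by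
  simpa [frobSq, conjTranspose_eq_transpose_of_trivial] using
    (posSemidef_conjTranspose_mul_self A).trace_nonneg

theorem frobSq_add {T m : ℕ} (A B : Matrix (Fin T) (Fin m) ℝ) :
    frobSq (A + B) = frobSq A + 2 * trace (Bᵀ * A) + frobSq B := by
  have hsymm : trace (Aᵀ * B) = trace (Bᵀ * A) := by
    rw [← trace_transpose, transpose_mul, transpose_transpose]
  simp only [frobSq, transpose_add, Matrix.add_mul, Matrix.mul_add, trace_add, hsymm]
  ring

theorem frobSq_le_of_frobSq_add_le {T m : ℕ} {D E : Matrix (Fin T) (Fin m) ℝ}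
    (h : frobSq (D + E) ≤ frobSq E) : frobSq D ≤ -2 * trace (Eᵀ * D) := by
  rw [frobSq_add] at h
  linarith

theorem stmt15_general {T m : ℕ} (r : ℕ) (C : ℝ)
    (Z χ E Zhat : Matrix (Fin T) (Fin m) ℝ) (hZ : Z = χ + E)
    (hχrank : χ.rank ≤ r) (hχnorm : specNorm χ ≤ C * Real.sqrt ((T : ℝ) * m))
    (hopt : Real.sqrt (frobSq (Z - Zhat)) ≤ Real.sqrt (frobSq E))
    (hZhatrank : Zhat.rank ≤ r) (hZhatnorm : specNorm Zhat ≤ C * Real.sqrt ((T : ℝ) * m)) :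
    (1 / ((T : ℝ) * m)) * frobSq (χ - Zhat) ≤
      4 * r * C * specNorm E / Real.sqrt ((T : ℝ) * m) := by
  set s := Real.sqrt ((T : ℝ) * m)
  have hfit : frobSq ((χ - Zhat) + E) ≤ frobSq E := by
    rw [← Real.sqrt_le_sqrt_iff (frobSq_nonneg E)]
    rwa [hZ, add_sub_right_comm] at hopt
  have hχ := abs_le.mp (abs_trace_transpose_mul_le_of_le E hχrank hχnorm)
  have hZhat := abs_le.mp (abs_trace_transpose_mul_le_of_le E hZhatrank hZhatnorm)
  have hmain : frobSq (χ - Zhat) ≤ 4 * r * C * specNorm E * s := by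
    have := frobSq_le_of_frobSq_add_le hfit
    rw [Matrix.mul_sub, trace_sub] at this
    linarith
  calc 1 / ((T : ℝ) * m) * frobSq (χ - Zhat) ≤ 1 / (s * s) * (4 * r * C * specNorm E * s) := by
        rw [Real.mul_self_sqrt (by positivity)]
        gcongr
    _ = 4 * r * C * specNorm E / s := by
        rw [one_div_mul_eq_div, mul_div_assoc, div_self_mul_self', div_eq_mul_inv]

/-- Deterministic core of the consistency theorem: if Z = χ + E, rank(χ) ≤ r,
‖χ‖ ≤ C√(Tm), and Ẑ satisfies ‖Z − Ẑ‖_F ≤ ‖E‖_F, rank(Ẑ) ≤ r, ‖Ẑ‖ ≤ C√(Tm),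
then (1/(Tm)) ‖χ − Ẑ‖_F² ≤ 4rC‖E‖/√(Tm). -/
theorem stmt15 {T m : ℕ} (hT : 0 < T) (hm : 0 < m) (r : ℕ) (C : ℝ)
    (Z χ E Zhat : Matrix (Fin T) (Fin m) ℝ) (hZ : Z = χ + E)
    (hχrank : χ.rank ≤ r) (hχnorm : specNorm χ ≤ C * Real.sqrt ((T : ℝ) * m))
    (hopt : Real.sqrt (frobSq (Z - Zhat)) ≤ Real.sqrt (frobSq E))
    (hZhatrank : Zhat.rank ≤ r) (hZhatnorm : specNorm Zhat ≤ C * Real.sqrt ((T : ℝ) * m)) :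
    (1 / ((T : ℝ) * m)) * frobSq (χ - Zhat) ≤
      4 * r * C * specNorm E / Real.sqrt ((T : ℝ) * m) :=
  stmt15_general r C Z χ E Zhat hZ hχrank hχnorm hopt hZhatrank hZhatnorm
end
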